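/- arXiv:2006.03307 — 4 statements merged into one kernel-verified Lean document; each statement's English description precedes it below -/
import Mathlib

section
/- (Kantorovich, existence part, affine invariant form) Let f : D → ℝⁿ be differentiable on an open convex set D ⊆ ℝⁿ, let x⁰ ∈ D with f'(x⁰) invertible, let η ≥ ‖f'(x⁰)⁻¹ f(x⁰)‖, and let ω > 0 satisfy ‖f'(x⁰)⁻¹(f'(x) − f'(y))‖ ≤ ω‖x − y‖ for all x, y ∈ D. If h = ηω ≤ 1/2 and the closed ball B̄(x⁰, ρ₋) ⊆ D where ρ₋ = (1 − √(1 − 2h))/ω, then f has a zero x* in B̄(x⁰, ρ₋). -/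
/-!
The simplified Newton map `N x = x - A f(x)` is iterated from `x₀`. Since `A f' x₀ = id` and
`A f'` is `ω`-Lipschitz, the quadratic Taylor bound gives
`‖N x - N y‖ ≤ ω/2 ‖x - y‖² + ω ‖y - x₀‖ ‖x - y‖`, so the steps are majorized by those of the scalar
iteration `t₀ = 0`, `tₖ₊₁ = η + ω/2 tₖ²`. For `ηω ≤ 1/2` this stays below the smaller root `ρ`
of `ω/2 t² - t + η`, hence the iterates form a Cauchy sequence in `B̄(x₀, ρ)` whose limit is a
fixed point of `N`, i.e. a zero of `f`.
-/

open Set Metric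

noncomputable def kantorovichSeq (η ω : ℝ) : ℕ → ℝ
  | 0 => 0
  | k + 1 => η + ω / 2 * kantorovichSeq η ω k ^ 2

section kantorovichSeq

variable {η ω : ℝ}

@[simp] lemma kantorovichSeq_zero : kantorovichSeq η ω 0 = 0 := rfl

lemma kantorovichSeq_succ (k : ℕ) :
    kantorovichSeq η ω (k + 1) = η + ω / 2 * kantorovichSeq η ω k ^ 2 := rfl

lemma kantorovichSeq_nonneg (hη : 0 ≤ η) (hω : 0 ≤ ω) (k : ℕ) : 0 ≤ kantorovichSeq η ω k := by
  cases k with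
  | zero => rfl
  | succ k => rw [kantorovichSeq_succ]; positivity

lemma kantorovichSeq_le {ρ : ℝ} (hη : 0 ≤ η) (hω : 0 ≤ ω) (hρ : 0 ≤ ρ)
    (hfix : η + ω / 2 * ρ ^ 2 ≤ ρ) (k : ℕ) : kantorovichSeq η ω k ≤ ρ := by
  induction k with
  | zero => exact hρ
  | succ k ih =>
    rw [kantorovichSeq_succ]
    have := kantorovichSeq_nonneg hη hω k
    calc η + ω / 2 * kantorovichSeq η ω k ^ 2 ≤ η + ω / 2 * ρ ^ 2 := by gcongr
      _ ≤ ρ := hfix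

lemma kantorovichSeq_sub_succ (k : ℕ) :
    kantorovichSeq η ω (k + 2) - kantorovichSeq η ω (k + 1) =
      ω / 2 * (kantorovichSeq η ω (k + 1) - kantorovichSeq η ω k) ^ 2 +
        ω * kantorovichSeq η ω k * (kantorovichSeq η ω (k + 1) - kantorovichSeq η ω k) := by
  rw [kantorovichSeq_succ (k + 1), kantorovichSeq_succ k]
  ring

end kantorovichSeq

lemma kantorovich_radius_spec {η ω : ℝ} (hη : 0 ≤ η) (hω : 0 < ω) (hh : η * ω ≤ 1 / 2) :
    0 ≤ (1 - Real.sqrt (1 - 2 * (η * ω))) / ω ∧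
      η + ω / 2 * ((1 - Real.sqrt (1 - 2 * (η * ω))) / ω) ^ 2 =
        (1 - Real.sqrt (1 - 2 * (η * ω))) / ω := by
  have hsq := Real.sq_sqrt (by linarith : 0 ≤ 1 - 2 * (η * ω))
  have hle : Real.sqrt (1 - 2 * (η * ω)) ≤ 1 :=
    Real.sqrt_le_one.2 (by nlinarith [mul_nonneg hη hω.le])
  generalize Real.sqrt (1 - 2 * (η * ω)) = s at hsq hle ⊢
  refine ⟨div_nonneg (by linarith) hω.le, ?_⟩
  field_simp
  linear_combination hsq

section Iteration

variable {E : Type*} [NormedAddCommGroup E]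

lemma cauchySeq_of_norm_sub_le_sub_of_bddAbove {X : ℕ → E} {t : ℕ → ℝ}
    (hX : ∀ k, ‖X (k + 1) - X k‖ ≤ t (k + 1) - t k) (ht : BddAbove (range t)) :
    CauchySeq X := by
  obtain ⟨ρ, hρ⟩ := ht
  refine cauchySeq_of_dist_le_of_summable (fun k => t (k + 1) - t k)
    (fun k => by rw [dist_comm, dist_eq_norm]; exact hX k) ?_
  refine summable_of_sum_range_le (c := ρ - t 0) (fun k => (norm_nonneg _).trans (hX k)) fun n => ?_
  rw [Finset.sum_range_sub]
  linarith [hρ (mem_range_self n)]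

lemma norm_iterate_sub_le_kantorovichSeq {N : E → E} {x₀ : E} {η ω ρ : ℝ}
    (hη : ‖N x₀ - x₀‖ ≤ η) (hω : 0 ≤ ω) (hρ : ∀ k, kantorovichSeq η ω k ≤ ρ)
    (hN : ∀ x ∈ closedBall x₀ ρ, ∀ y ∈ closedBall x₀ ρ,
      ‖N x - N y‖ ≤ ω / 2 * ‖x - y‖ ^ 2 + ω * ‖y - x₀‖ * ‖x - y‖) (k : ℕ) :
    ‖N^[k + 1] x₀ - N^[k] x₀‖ ≤ kantorovichSeq η ω (k + 1) - kantorovichSeq η ω k ∧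
      ‖N^[k] x₀ - x₀‖ ≤ kantorovichSeq η ω k := by
  set t := kantorovichSeq η ω
  have hη0 : 0 ≤ η := (norm_nonneg _).trans hη
  induction k with
  | zero => simpa [t, kantorovichSeq_succ] using hη
  | succ k ih =>
    obtain ⟨hstep, hdist⟩ := ih
    have hdist' : ‖N^[k + 1] x₀ - x₀‖ ≤ t (k + 1) :=
      calc ‖N^[k + 1] x₀ - x₀‖ ≤ ‖N^[k + 1] x₀ - N^[k] x₀‖ + ‖N^[k] x₀ - x₀‖ :=
            norm_sub_le_norm_sub_add_norm_sub _ _ _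
        _ ≤ t (k + 1) - t k + t k := add_le_add hstep hdist
        _ = t (k + 1) := sub_add_cancel _ _
    refine ⟨?_, hdist'⟩
    have hmem : ∀ j, ‖N^[j] x₀ - x₀‖ ≤ t j → N^[j] x₀ ∈ closedBall x₀ ρ :=
      fun j hj => mem_closedBall_iff_norm.2 (hj.trans (hρ j))
    have ht0 := kantorovichSeq_nonneg hη0 hω k
    calc ‖N^[k + 2] x₀ - N^[k + 1] x₀‖ = ‖N (N^[k + 1] x₀) - N (N^[k] x₀)‖ := by
          rw [Function.iterate_succ_apply' N (k + 1), ← Function.iterate_succ_apply' N k]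
      _ ≤ ω / 2 * ‖N^[k + 1] x₀ - N^[k] x₀‖ ^ 2 + ω * ‖N^[k] x₀ - x₀‖ * ‖N^[k + 1] x₀ - N^[k] x₀‖ :=
          hN _ (hmem _ hdist') _ (hmem _ hdist)
      _ ≤ ω / 2 * (t (k + 1) - t k) ^ 2 + ω * t k * (t (k + 1) - t k) := by gcongr
      _ = t (k + 2) - t (k + 1) := (kantorovichSeq_sub_succ k).symm

variable [NormedSpace ℝ E] {F : Type*} [NormedAddCommGroup F] [NormedSpace ℝ F]

/-- The sharp factor `1 / 2`, needed for the threshold `ηω ≤ 1/2`, comes from comparing along the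
segment with the boundary `t ↦ ω ‖y - x‖² t² / 2` rather than using the mean value inequality. -/
theorem Convex.norm_image_sub_sub_fderiv_le_of_lipschitz {s : Set E} (hs : Convex ℝ s)
    {g : E → F} {g' : E → E →L[ℝ] F} {ω : ℝ} (hg : ∀ x ∈ s, HasFDerivAt g (g' x) x)
    (hL : ∀ x ∈ s, ∀ y ∈ s, ‖g' x - g' y‖ ≤ ω * ‖x - y‖) {x y : E} (hx : x ∈ s) (hy : y ∈ s) :
    ‖g y - g x - g' x (y - x)‖ ≤ ω / 2 * ‖y - x‖ ^ 2 := by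
  set v := y - x
  have hseg : ∀ t ∈ Icc (0 : ℝ) 1, x + t • v ∈ s := fun t ht => hs.add_smul_sub_mem hx hy ht
  set ψ : ℝ → F := fun t => g (x + t • v) - g x - t • g' x v
  have hψ : ∀ t ∈ Icc (0 : ℝ) 1, HasDerivAt ψ (g' (x + t • v) v - g' x v) t := by
    intro t ht
    have hline : HasDerivAt (fun t : ℝ => x + t • v) v t := by
      simpa using ((hasDerivAt_id t).smul_const v).const_add x
    convert (((hg _ (hseg t ht)).comp_hasDerivAt t hline).sub_const (g x)).sub
      ((hasDerivAt_id t).smul_const (g' x v)) using 1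
    · rfl
    · rw [one_smul]
  have hψ' : ∀ t ∈ Ico (0 : ℝ) 1, ‖g' (x + t • v) v - g' x v‖ ≤ ω * ‖v‖ ^ 2 * t := by
    intro t ht
    calc ‖g' (x + t • v) v - g' x v‖ = ‖(g' (x + t • v) - g' x) v‖ := rfl
      _ ≤ ‖g' (x + t • v) - g' x‖ * ‖v‖ := ContinuousLinearMap.le_opNorm _ _
      _ ≤ ω * ‖x + t • v - x‖ * ‖v‖ := by
        gcongr; exact hL _ (hseg t (Ico_subset_Icc_self ht)) x hx
      _ = ω * ‖v‖ ^ 2 * t := by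
        rw [add_sub_cancel_left, norm_smul, Real.norm_of_nonneg ht.1]; ring
  have hB : ∀ t : ℝ, HasDerivAt (fun t => ω * ‖v‖ ^ 2 / 2 * t ^ 2) (ω * ‖v‖ ^ 2 * t) t := by
    intro t
    refine ((hasDerivAt_pow 2 t).const_mul _).congr_deriv ?_
    push_cast
    ring
  have := image_norm_le_of_norm_deriv_right_le_deriv_boundary
    (fun t ht => (hψ t ht).continuousAt.continuousWithinAt)
    (fun t ht => (hψ t (Ico_subset_Icc_self ht)).hasDerivWithinAt) (by simp [ψ]) hB hψ'
    (right_mem_Icc.2 zero_le_one)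
  convert this using 1 <;> simp only [ψ, v, one_smul, add_sub_cancel]; ring

/-- Since `g' x₀ = id`, the difference of Newton steps splits as
`(g' x₀ - g' y) (x - y) - (g x - g y - g' y (x - y))`. -/
lemma Convex.norm_sub_image_sub_sub_le {s : Set E} (hs : Convex ℝ s) {g : E → E}
    {g' : E → E →L[ℝ] E} {ω : ℝ} (hg : ∀ x ∈ s, HasFDerivAt g (g' x) x)
    (hL : ∀ x ∈ s, ∀ y ∈ s, ‖g' x - g' y‖ ≤ ω * ‖x - y‖) {x₀ x y : E}
    (hid : g' x₀ = ContinuousLinearMap.id ℝ E) (hx₀ : x₀ ∈ s) (hx : x ∈ s) (hy : y ∈ s) :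
    ‖(x - g x) - (y - g y)‖ ≤ ω / 2 * ‖x - y‖ ^ 2 + ω * ‖y - x₀‖ * ‖x - y‖ := by
  have hsplit : (x - g x) - (y - g y) =
      (g' x₀ - g' y) (x - y) - (g x - g y - g' y (x - y)) := by
    simp only [sub_apply, hid, ContinuousLinearMap.id_apply]
    abel
  have hlin : ‖(g' x₀ - g' y) (x - y)‖ ≤ ω * ‖y - x₀‖ * ‖x - y‖ :=
    calc ‖(g' x₀ - g' y) (x - y)‖ ≤ ‖g' x₀ - g' y‖ * ‖x - y‖ := ContinuousLinearMap.le_opNorm _ _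
      _ ≤ ω * ‖y - x₀‖ * ‖x - y‖ := by
        rw [norm_sub_rev y]; gcongr; exact hL x₀ hx₀ y hy
  rw [hsplit, add_comm]
  exact (norm_sub_le _ _).trans
    (add_le_add hlin (hs.norm_image_sub_sub_fderiv_le_of_lipschitz hg hL hy hx))

theorem Convex.exists_mem_closedBall_eq_zero_of_lipschitz_fderiv [CompleteSpace E] {s : Set E}
    (hs : Convex ℝ s) {g : E → E} {g' : E → E →L[ℝ] E} {x₀ : E} {η ω ρ : ℝ}
    (hg : ∀ x ∈ s, HasFDerivAt g (g' x) x)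
    (hL : ∀ x ∈ s, ∀ y ∈ s, ‖g' x - g' y‖ ≤ ω * ‖x - y‖)
    (hid : g' x₀ = ContinuousLinearMap.id ℝ E) (hη : ‖g x₀‖ ≤ η) (hω : 0 ≤ ω) (hρ : 0 ≤ ρ)
    (hfix : η + ω / 2 * ρ ^ 2 ≤ ρ) (hball : closedBall x₀ ρ ⊆ s) :
    ∃ x ∈ closedBall x₀ ρ, g x = 0 := by
  set N : E → E := fun x => x - g x
  have ht : ∀ k, kantorovichSeq η ω k ≤ ρ :=
    kantorovichSeq_le ((norm_nonneg _).trans hη) hω hρ hfix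
  have hbound := norm_iterate_sub_le_kantorovichSeq (N := N) (by simpa [N] using hη) hω ht
    fun x hx y hy => hs.norm_sub_image_sub_sub_le hg hL hid (hball (mem_closedBall_self hρ))
      (hball hx) (hball hy)
  have hmem : ∀ k, N^[k] x₀ ∈ closedBall x₀ ρ :=
    fun k => mem_closedBall_iff_norm.2 ((hbound k).2.trans (ht k))
  obtain ⟨x, hx⟩ := cauchySeq_tendsto_of_complete <|
    cauchySeq_of_norm_sub_le_sub_of_bddAbove (X := fun k => N^[k] x₀) (fun k => (hbound k).1)
      ⟨ρ, forall_mem_range.2 ht⟩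
  have hxmem : x ∈ closedBall x₀ ρ := isClosed_closedBall.mem_of_tendsto hx (.of_forall hmem)
  have hNx : N x = x :=
    isFixedPt_of_tendsto_iterate hx (continuousAt_id.sub (hg x (hball hxmem)).continuousAt)
  exact ⟨x, hxmem, sub_eq_self.mp hNx⟩

end Iteration

theorem kantorovich_existence_general
    (n : ℕ) (D : Set (Fin n → ℝ)) (hDconv : Convex ℝ D)
    (f : (Fin n → ℝ) → (Fin n → ℝ))
    (f' : (Fin n → ℝ) → ((Fin n → ℝ) →L[ℝ] (Fin n → ℝ)))
    (hdiff : ∀ x ∈ D, HasFDerivAt f (f' x) x)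
    (x0 : Fin n → ℝ)
    (A : (Fin n → ℝ) →L[ℝ] (Fin n → ℝ))
    (hA1 : A ∘L f' x0 = ContinuousLinearMap.id ℝ (Fin n → ℝ))
    (hA2 : f' x0 ∘L A = ContinuousLinearMap.id ℝ (Fin n → ℝ))
    (η ω h : ℝ) (hη : ‖A (f x0)‖ ≤ η) (hω : 0 < ω)
    (hLip : ∀ x ∈ D, ∀ y ∈ D, ‖A ∘L (f' x - f' y)‖ ≤ ω * ‖x - y‖)
    (hh : h = η * ω) (hhalf : h ≤ 1 / 2)
    (ρ : ℝ) (hρ : ρ = (1 - Real.sqrt (1 - 2 * h)) / ω)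
    (hball : Metric.closedBall x0 ρ ⊆ D) :
    ∃ xs ∈ Metric.closedBall x0 ρ, f xs = 0 := by
  subst hρ hh
  obtain ⟨hρ0, hfix⟩ := kantorovich_radius_spec ((norm_nonneg _).trans hη) hω hhalf
  obtain ⟨xs, hxs, hzero⟩ := hDconv.exists_mem_closedBall_eq_zero_of_lipschitz_fderiv
    (g := fun x => A (f x)) (g' := fun x => A ∘L f' x)
    (fun x hx => A.hasFDerivAt.comp x (hdiff x hx))
    (fun x hx y hy => by simpa only [ContinuousLinearMap.comp_sub] using hLip x hx y hy)
    hA1 hη hω.le hρ0 hfix.le hball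
  refine ⟨xs, hxs, ?_⟩
  simpa [hzero] using (congrArg (· (f xs)) hA2).symm

/-- Kantorovich's theorem, affine invariant form, existence part. -/
theorem kantorovich_existence
    (n : ℕ) (D : Set (Fin n → ℝ)) (hDopen : IsOpen D) (hDconv : Convex ℝ D)
    (f : (Fin n → ℝ) → (Fin n → ℝ))
    (f' : (Fin n → ℝ) → ((Fin n → ℝ) →L[ℝ] (Fin n → ℝ)))
    (hdiff : ∀ x ∈ D, HasFDerivAt f (f' x) x)
    (x0 : Fin n → ℝ) (hx0 : x0 ∈ D)
    (A : (Fin n → ℝ) →L[ℝ] (Fin n → ℝ))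
    (hA1 : A ∘L f' x0 = ContinuousLinearMap.id ℝ (Fin n → ℝ))
    (hA2 : f' x0 ∘L A = ContinuousLinearMap.id ℝ (Fin n → ℝ))
    (η ω h : ℝ) (hη : ‖A (f x0)‖ ≤ η) (hω : 0 < ω)
    (hLip : ∀ x ∈ D, ∀ y ∈ D, ‖A ∘L (f' x - f' y)‖ ≤ ω * ‖x - y‖)
    (hh : h = η * ω) (hhalf : h ≤ 1 / 2)
    (ρ : ℝ) (hρ : ρ = (1 - Real.sqrt (1 - 2 * h)) / ω)
    (hball : Metric.closedBall x0 ρ ⊆ D) :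
    ∃ xs ∈ Metric.closedBall x0 ρ, f xs = 0 :=
  kantorovich_existence_general n D hDconv f f' hdiff x0 A hA1 hA2 η ω h hη hω hLip hh hhalf ρ hρ
    hball
end

section
/- (Kantorovich, uniqueness part) Under the hypotheses of Kantorovich's theorem (f : D → ℝⁿ differentiable on open convex D, f'(x⁰) invertible, ‖f'(x⁰)⁻¹ f(x⁰)‖ ≤ η, Lipschitz constant ω for f'(x⁰)⁻¹ f' on D, h = ηω ≤ 1/2, B̄(x⁰, ρ₋) ⊆ D), the zero x* of f in B̄(x⁰, ρ₋) is the unique zero of f in (B̄(x⁰, ρ₋) ∪ B(x⁰, ρ₊)) ∩ D, where ρ₊ = (1 + √(1 − 2h))/ω. -/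
/-!
The simplified Newton map `g x = x - A (f x)` has derivative `A (f' x₀ - f' z)` at `z`, of norm
at most `ω ‖z - x₀‖`; integrating along segments gives
`‖g x - g y‖ ≤ ω / 2 (‖x - x₀‖ + ‖y - x₀‖) ‖x - y‖`. Hence the iterates `g^[k] x₀` are majorized
by the scalar iteration `t ↦ η + ω / 2 t²` from `0`, which increases to the smaller root `ρ₋` of
`ω / 2 t² - t + η`; they converge to a fixed point `x*`, a zero of `f`. A fixed point `y` with
`‖y - x₀‖ ≤ ρ₋` satisfies `‖y - g^[k] x₀‖ ≤ ρ₋ - t_k` by the same estimate, so `y = x*`; a fixed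
point with `‖y - x₀‖ < ρ₊` is caught by the contraction factor
`ω / 2 (‖y - x₀‖ + ρ₋) < ω / 2 (ρ₊ + ρ₋) = 1`.
-/

open Set Filter Topology Metric

theorem norm_add_smul_sub_sub_le {E : Type*} [SeminormedAddCommGroup E] [NormedSpace ℝ E]
    (x y x₀ : E) {t : ℝ} (ht : t ∈ Icc (0 : ℝ) 1) :
    ‖y + t • (x - y) - x₀‖ ≤ (1 - t) * ‖y - x₀‖ + t * ‖x - x₀‖ := by
  have : y + t • (x - y) - x₀ = (1 - t) • (y - x₀) + t • (x - x₀) := by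
    simp only [smul_sub, sub_smul, one_smul]; abel
  rw [this]
  refine (norm_add_le _ _).trans_eq ?_
  rw [norm_smul, norm_smul, Real.norm_of_nonneg (by linarith [ht.2]), Real.norm_of_nonneg ht.1]

theorem Convex.norm_image_sub_le_of_norm_hasFDerivAt_le_mul_norm_sub
    {E F : Type*} [NormedAddCommGroup E] [NormedSpace ℝ E]
    [NormedAddCommGroup F] [NormedSpace ℝ F]
    {g : E → F} {g' : E → E →L[ℝ] F} {s : Set E} (hs : Convex ℝ s)
    (hg : ∀ z ∈ s, HasFDerivAt g (g' z) z) {ω : ℝ} (hω : 0 ≤ ω) {x₀ : E}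
    (hbound : ∀ z ∈ s, ‖g' z‖ ≤ ω * ‖z - x₀‖) {x y : E} (hx : x ∈ s) (hy : y ∈ s) :
    ‖g x - g y‖ ≤ ω / 2 * (‖x - x₀‖ + ‖y - x₀‖) * ‖x - y‖ := by
  set a := ‖y - x₀‖
  set b := ‖x - x₀‖
  set c := ‖x - y‖
  set z : ℝ → E := fun t => y + t • (x - y)
  have hz_mem : ∀ t ∈ Icc (0 : ℝ) 1, z t ∈ s := fun t ht => by
    simpa [z, AffineMap.lineMap_apply_module', add_comm] using hs.lineMap_mem hy hx ht
  have hφ : ∀ t ∈ Icc (0 : ℝ) 1, HasDerivAt (fun t => g (z t) - g y) (g' (z t) (x - y)) t :=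
    fun t ht => by
      have hz : HasDerivAt (fun t : ℝ => y + t • (x - y)) (x - y) t := by
        simpa using ((hasDerivAt_id t).smul_const (x - y)).const_add y
      exact ((hg _ (hz_mem t ht)).comp_hasDerivAt t hz).sub_const (g y)
  -- `B` integrates the bound `ω * c * ‖z t - x₀‖ ≤ ω * c * ((1 - t) * a + t * b)`.
  set B : ℝ → ℝ := fun t => ω * c * (a * t + (b - a) * (t ^ 2 / 2))
  have hB : ∀ t, HasDerivAt B (ω * c * (a + (b - a) * t)) t := fun t => by
    refine ((((hasDerivAt_id' t).const_mul a).add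
      (((hasDerivAt_pow 2 t).div_const 2).const_mul (b - a))).const_mul (ω * c)).congr_deriv ?_
    push_cast; ring
  have hbound_deriv : ∀ t ∈ Ico (0 : ℝ) 1, ‖g' (z t) (x - y)‖ ≤ ω * c * (a + (b - a) * t) := by
    intro t ht
    have ht' : t ∈ Icc (0 : ℝ) 1 := Ico_subset_Icc_self ht
    calc ‖g' (z t) (x - y)‖ ≤ ‖g' (z t)‖ * c := (g' (z t)).le_opNorm _
      _ ≤ ω * ‖z t - x₀‖ * c := by gcongr; exact hbound _ (hz_mem t ht')
      _ ≤ ω * ((1 - t) * a + t * b) * c := by gcongr; exact norm_add_smul_sub_sub_le x y x₀ ht'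
      _ = ω * c * (a + (b - a) * t) := by ring
  have key := image_norm_le_of_norm_deriv_right_le_deriv_boundary
    (fun t ht => (hφ t ht).continuousAt.continuousWithinAt)
    (fun t ht => (hφ t (Ico_subset_Icc_self ht)).hasDerivWithinAt)
    (by simp [z, B]) hB hbound_deriv (right_mem_Icc.2 zero_le_one)
  calc ‖g x - g y‖ = ‖g (z 1) - g y‖ := by simp [z]
    _ ≤ B 1 := key
    _ = ω / 2 * (b + a) * c := by simp only [B]; ring

/-- `r ≤ s` are the roots of `ω / 2 * t ^ 2 - t + η`, given by Vieta's formulas. -/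
structure KantorovichRadii (η ω r s : ℝ) : Prop where
  ω_nonneg : 0 ≤ ω
  r_nonneg : 0 ≤ r
  r_le_s : r ≤ s
  add_eq : ω / 2 * (r + s) = 1
  mul_eq : ω / 2 * (r * s) = η

theorem kantorovichRadii_of_sqrt {η ω : ℝ} (hη : 0 ≤ η) (hω : 0 < ω) (hh : η * ω ≤ 1 / 2) :
    KantorovichRadii η ω ((1 - √(1 - 2 * (η * ω))) / ω) ((1 + √(1 - 2 * (η * ω))) / ω) := by
  have hsq : √(1 - 2 * (η * ω)) ^ 2 = 1 - 2 * (η * ω) := Real.sq_sqrt (by linarith)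
  have hle : √(1 - 2 * (η * ω)) ≤ 1 :=
    Real.sqrt_le_one.mpr (by nlinarith [mul_nonneg hη hω.le])
  have hnn := Real.sqrt_nonneg (1 - 2 * (η * ω))
  generalize √(1 - 2 * (η * ω)) = d at *
  refine ⟨hω.le, div_nonneg (by linarith) hω.le, by gcongr; linarith, ?_, ?_⟩
  · field_simp; ring
  · field_simp; linear_combination -hsq

noncomputable def kantorovichMajorant (η ω : ℝ) : ℕ → ℝ
  | 0 => 0
  | k + 1 => η + ω / 2 * kantorovichMajorant η ω k ^ 2

namespace KantorovichRadii

variable {η ω r s : ℝ} (hR : KantorovichRadii η ω r s)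
include hR

theorem ω_pos : 0 < ω :=
  hR.ω_nonneg.lt_of_ne fun h => by simpa [← h] using hR.add_eq

theorem add_mul_sq_mem_Icc {t : ℝ} (ht : t ∈ Icc 0 r) : η + ω / 2 * t ^ 2 ∈ Icc t r := by
  obtain ⟨ht0, htr⟩ := ht
  have hrt : 0 ≤ ω * (r - t) := mul_nonneg hR.ω_nonneg (sub_nonneg.2 htr)
  constructor
  · have : η + ω / 2 * t ^ 2 - t = ω / 2 * ((r - t) * (s - t)) := by
      linear_combination t * hR.add_eq - hR.mul_eq
    nlinarith [mul_nonneg hrt (sub_nonneg.2 (htr.trans hR.r_le_s))]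
  · have : r - (η + ω / 2 * t ^ 2) = ω / 2 * ((r - t) * (r + t)) := by
      linear_combination hR.mul_eq - r * hR.add_eq
    nlinarith [mul_nonneg hrt (add_nonneg (ht0.trans htr) ht0)]

theorem kantorovichMajorant_mem_Icc (k : ℕ) : kantorovichMajorant η ω k ∈ Icc 0 r := by
  induction k with
  | zero => exact ⟨le_rfl, hR.r_nonneg⟩
  | succ k ih =>
    have := hR.add_mul_sq_mem_Icc ih
    exact ⟨ih.1.trans this.1, this.2⟩

theorem monotone_kantorovichMajorant : Monotone (kantorovichMajorant η ω) :=
  monotone_nat_of_le_succ fun k => (hR.add_mul_sq_mem_Icc (hR.kantorovichMajorant_mem_Icc k)).1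

theorem tendsto_kantorovichMajorant : Tendsto (kantorovichMajorant η ω) atTop (𝓝 r) := by
  have hlim := tendsto_atTop_ciSup hR.monotone_kantorovichMajorant
    ⟨r, forall_mem_range.2 fun k => (hR.kantorovichMajorant_mem_Icc k).2⟩
  set L := ⨆ k, kantorovichMajorant η ω k
  have hLr : L ≤ r := le_of_tendsto' hlim fun k => (hR.kantorovichMajorant_mem_Icc k).2
  have hfix : L = η + ω / 2 * L ^ 2 :=
    tendsto_nhds_unique ((tendsto_add_atTop_iff_nat 1).2 hlim)
      (tendsto_const_nhds.add (tendsto_const_nhds.mul (hlim.pow 2)))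
  have hroots : ω / 2 * ((r - L) * (s - L)) = 0 := by
    linear_combination hR.mul_eq - L * hR.add_eq - hfix
  have := hR.ω_pos
  obtain rfl : L = r := by
    rcases mul_eq_zero.1 hroots with h | h
    · exact absurd h (by positivity)
    · rcases mul_eq_zero.1 h with h | h <;> linarith [hR.r_le_s]
  exact hlim

end KantorovichRadii

section Iteration

variable {E : Type*} [NormedAddCommGroup E]

structure IsKantorovichMap (g : E → E) (D : Set E) (x₀ : E) (η ω r s : ℝ) : Prop where
  radii : KantorovichRadii η ω r s
  norm_sub_le : ∀ x ∈ D, ∀ y ∈ D, ‖g x - g y‖ ≤ ω / 2 * (‖x - x₀‖ + ‖y - x₀‖) * ‖x - y‖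
  norm_apply_sub_le : ‖g x₀ - x₀‖ ≤ η
  closedBall_subset : closedBall x₀ r ⊆ D

namespace IsKantorovichMap

variable {g : E → E} {D : Set E} {x₀ : E} {η ω r s : ℝ} (hK : IsKantorovichMap g D x₀ η ω r s)
include hK

theorem norm_sub_le_of_norm_le {x y : E} (hx : ‖x - x₀‖ ≤ r) (hy : ‖y - x₀‖ ≤ r) :
    ‖g x - g y‖ ≤ ω / 2 * (‖x - x₀‖ + ‖y - x₀‖) * ‖x - y‖ :=
  hK.norm_sub_le x (hK.closedBall_subset (mem_closedBall_iff_norm.2 hx))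
    y (hK.closedBall_subset (mem_closedBall_iff_norm.2 hy))

theorem norm_iterate_sub_le (k : ℕ) :
    ‖g^[k] x₀ - x₀‖ ≤ kantorovichMajorant η ω k ∧
      ‖g^[k + 1] x₀ - g^[k] x₀‖ ≤
        kantorovichMajorant η ω (k + 1) - kantorovichMajorant η ω k := by
  set t := kantorovichMajorant η ω
  have ht := hK.radii.kantorovichMajorant_mem_Icc
  induction k with
  | zero => simpa [t, kantorovichMajorant] using hK.norm_apply_sub_le
  | succ k ih =>
    have hsucc : ‖g^[k + 1] x₀ - x₀‖ ≤ t (k + 1) := by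
      calc ‖g^[k + 1] x₀ - x₀‖ ≤ ‖g^[k + 1] x₀ - g^[k] x₀‖ + ‖g^[k] x₀ - x₀‖ :=
            norm_sub_le_norm_sub_add_norm_sub _ _ _
        _ ≤ t (k + 1) := by linarith [ih.1, ih.2]
    refine ⟨hsucc, ?_⟩
    have := hK.radii.ω_nonneg
    calc ‖g^[k + 2] x₀ - g^[k + 1] x₀‖ = ‖g (g^[k + 1] x₀) - g (g^[k] x₀)‖ := by
          simp only [Function.iterate_succ_apply']
      _ ≤ ω / 2 * (‖g^[k + 1] x₀ - x₀‖ + ‖g^[k] x₀ - x₀‖) * ‖g^[k + 1] x₀ - g^[k] x₀‖ :=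
          hK.norm_sub_le_of_norm_le (hsucc.trans (ht _).2) (ih.1.trans (ht k).2)
      _ ≤ ω / 2 * (t (k + 1) + t k) * (t (k + 1) - t k) := by
          gcongr
          · exact mul_nonneg (by linarith) (add_nonneg (ht _).1 (ht k).1)
          · exact ih.1
          · exact ih.2
      _ = t (k + 2) - t (k + 1) := by simp only [t, kantorovichMajorant]; ring

theorem norm_iterate_sub_le_radius (k : ℕ) : ‖g^[k] x₀ - x₀‖ ≤ r :=
  (hK.norm_iterate_sub_le k).1.trans (hK.radii.kantorovichMajorant_mem_Icc k).2

theorem cauchySeq_iterate : CauchySeq fun k => g^[k] x₀ := by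
  set t := kantorovichMajorant η ω
  refine cauchySeq_of_dist_le_of_summable (fun k => t (k + 1) - t k) (fun k => ?_) ?_
  · rw [dist_comm, dist_eq_norm]
    exact (hK.norm_iterate_sub_le k).2
  · refine summable_of_sum_range_le (c := r)
      (fun k => sub_nonneg.2 (hK.radii.monotone_kantorovichMajorant k.le_succ)) fun n => ?_
    rw [Finset.sum_range_sub (f := t)]
    simpa [t, kantorovichMajorant] using (hK.radii.kantorovichMajorant_mem_Icc n).2

theorem norm_sub_iterate_le_of_isFixedPt {y : E} (hy : ‖y - x₀‖ ≤ r)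
    (hfix : Function.IsFixedPt g y) (k : ℕ) :
    ‖y - g^[k] x₀‖ ≤ r - kantorovichMajorant η ω k := by
  set t := kantorovichMajorant η ω
  induction k with
  | zero => simpa [t, kantorovichMajorant] using hy
  | succ k ih =>
    have ht := hK.radii.kantorovichMajorant_mem_Icc k
    have := hK.radii.ω_nonneg
    calc ‖y - g^[k + 1] x₀‖ = ‖g y - g (g^[k] x₀)‖ := by
          rw [hfix.eq, Function.iterate_succ_apply']
      _ ≤ ω / 2 * (‖y - x₀‖ + ‖g^[k] x₀ - x₀‖) * ‖y - g^[k] x₀‖ :=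
          hK.norm_sub_le_of_norm_le hy (hK.norm_iterate_sub_le_radius k)
      _ ≤ ω / 2 * (r + t k) * (r - t k) := by
          gcongr
          · exact mul_nonneg (by linarith) (by linarith [ht.1, ht.2])
          · exact (hK.norm_iterate_sub_le k).1
      _ = r - t (k + 1) := by
          simp only [t, kantorovichMajorant]
          linear_combination r * hK.radii.add_eq - hK.radii.mul_eq

theorem tendsto_iterate_of_isFixedPt {y : E} (hy : ‖y - x₀‖ ≤ r)
    (hfix : Function.IsFixedPt g y) : Tendsto (fun k => g^[k] x₀) atTop (𝓝 y) := by
  rw [tendsto_iff_norm_sub_tendsto_zero]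
  have hlim : Tendsto (fun k => r - kantorovichMajorant η ω k) atTop (𝓝 0) := by
    simpa using (tendsto_const_nhds (x := r)).sub hK.radii.tendsto_kantorovichMajorant
  refine squeeze_zero (fun _ => norm_nonneg _) (fun k => ?_) hlim
  rw [norm_sub_rev]
  exact hK.norm_sub_iterate_le_of_isFixedPt hy hfix k

theorem exists_isFixedPt_unique [CompleteSpace E] :
    ∃ xs ∈ closedBall x₀ r, Function.IsFixedPt g xs ∧
      ∀ y ∈ (closedBall x₀ r ∪ ball x₀ s) ∩ D, Function.IsFixedPt g y → y = xs := by
  set X := fun k => g^[k] x₀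
  obtain ⟨xs, hxs⟩ := cauchySeq_tendsto_of_complete hK.cauchySeq_iterate
  have hxs_mem : ‖xs - x₀‖ ≤ r := mem_closedBall_iff_norm.1 <| isClosed_closedBall.mem_of_tendsto
    hxs (.of_forall fun k => mem_closedBall_iff_norm.2 (hK.norm_iterate_sub_le_radius k))
  -- On `closedBall x₀ r` the map `g` is `ω * r`-Lipschitz.
  have hgX : Tendsto (fun k => g (X k)) atTop (𝓝 (g xs)) := by
    rw [tendsto_iff_norm_sub_tendsto_zero] at hxs ⊢
    refine squeeze_zero (fun _ => norm_nonneg _) (fun k => ?_)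
      (by simpa using hxs.const_mul (ω * r))
    have := hK.radii.ω_nonneg
    calc ‖g (X k) - g xs‖ ≤ ω / 2 * (‖X k - x₀‖ + ‖xs - x₀‖) * ‖X k - xs‖ :=
          hK.norm_sub_le_of_norm_le (hK.norm_iterate_sub_le_radius k) hxs_mem
      _ ≤ ω / 2 * (r + r) * ‖X k - xs‖ := by gcongr; exact hK.norm_iterate_sub_le_radius k
      _ = ω * r * ‖X k - xs‖ := by ring
  have hfix : Function.IsFixedPt g xs := tendsto_nhds_unique hgX <| by
    simpa only [X, Function.iterate_succ_apply'] using (tendsto_add_atTop_iff_nat 1).2 hxs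
  refine ⟨xs, mem_closedBall_iff_norm.2 hxs_mem, hfix, ?_⟩
  rintro y ⟨hy | hy, hyD⟩ hy_fix
  · exact tendsto_nhds_unique
      (hK.tendsto_iterate_of_isFixedPt (mem_closedBall_iff_norm.1 hy) hy_fix) hxs
  · rw [mem_ball_iff_norm] at hy
    have hcontr :=
      hK.norm_sub_le y hyD xs (hK.closedBall_subset (mem_closedBall_iff_norm.2 hxs_mem))
    rw [hy_fix.eq, hfix.eq] at hcontr
    have hq : ω / 2 * (‖y - x₀‖ + ‖xs - x₀‖) < 1 := by
      have := hK.radii.ω_pos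
      calc ω / 2 * (‖y - x₀‖ + ‖xs - x₀‖) < ω / 2 * (s + r) :=
            mul_lt_mul_of_pos_left (add_lt_add_of_lt_of_le hy hxs_mem) (by positivity)
        _ = 1 := by linear_combination hK.radii.add_eq
    have : ‖y - xs‖ ≤ 0 := by nlinarith [norm_nonneg (y - xs)]
    exact sub_eq_zero.1 (norm_le_zero_iff.1 this)

end IsKantorovichMap

end Iteration

section SimplifiedNewton

variable {𝕜 E F : Type*} [NontriviallyNormedField 𝕜] [NormedAddCommGroup E] [NormedSpace 𝕜 E]
  [NormedAddCommGroup F] [NormedSpace 𝕜 F]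

def simplifiedNewtonMap (A : F →L[𝕜] E) (f : E → F) (x : E) : E := x - A (f x)

theorem isFixedPt_simplifiedNewtonMap_iff {A : F →L[𝕜] E} (hA : Function.Injective A)
    {f : E → F} {x : E} : Function.IsFixedPt (simplifiedNewtonMap A f) x ↔ f x = 0 := by
  rw [Function.IsFixedPt, simplifiedNewtonMap, sub_eq_self, map_eq_zero_iff A hA]

theorem HasFDerivAt.simplifiedNewtonMap {A : F →L[𝕜] E} {L f' : E →L[𝕜] F}
    (hA : A ∘L L = ContinuousLinearMap.id 𝕜 E) {f : E → F} {z : E} (hf : HasFDerivAt f f' z) :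
    HasFDerivAt (simplifiedNewtonMap A f) (A ∘L (L - f')) z := by
  rw [ContinuousLinearMap.comp_sub, hA]
  exact (hasFDerivAt_id z).sub (A.hasFDerivAt.comp z hf)

end SimplifiedNewton

theorem kantorovich_uniqueness_general
    (n : ℕ) (D : Set (Fin n → ℝ)) (hDconv : Convex ℝ D)
    (f : (Fin n → ℝ) → (Fin n → ℝ))
    (f' : (Fin n → ℝ) → ((Fin n → ℝ) →L[ℝ] (Fin n → ℝ)))
    (hdiff : ∀ x ∈ D, HasFDerivAt f (f' x) x)
    (x0 : Fin n → ℝ) (hx0 : x0 ∈ D)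
    (A : (Fin n → ℝ) →L[ℝ] (Fin n → ℝ))
    (hA1 : A ∘L f' x0 = ContinuousLinearMap.id ℝ (Fin n → ℝ))
    (hA2 : f' x0 ∘L A = ContinuousLinearMap.id ℝ (Fin n → ℝ))
    (η ω h : ℝ) (hη : ‖A (f x0)‖ ≤ η) (hω : 0 < ω)
    (hLip : ∀ x ∈ D, ∀ y ∈ D, ‖A ∘L (f' x - f' y)‖ ≤ ω * ‖x - y‖)
    (hh : h = η * ω) (hhalf : h ≤ 1 / 2)
    (ρm ρp : ℝ) (hρm : ρm = (1 - Real.sqrt (1 - 2 * h)) / ω)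
    (hρp : ρp = (1 + Real.sqrt (1 - 2 * h)) / ω)
    (hball : Metric.closedBall x0 ρm ⊆ D) :
    ∃ xs ∈ Metric.closedBall x0 ρm, f xs = 0 ∧
      ∀ y ∈ (Metric.closedBall x0 ρm ∪ Metric.ball x0 ρp) ∩ D, f y = 0 → y = xs := by
  subst hρm hρp hh
  have hR := kantorovichRadii_of_sqrt ((norm_nonneg _).trans hη) hω hhalf
  have hA : Function.Injective A :=
    Function.LeftInverse.injective (g := f' x0) (DFunLike.congr_fun hA2)
  have hg : ∀ x ∈ D, ∀ y ∈ D, ‖simplifiedNewtonMap A f x - simplifiedNewtonMap A f y‖ ≤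
      ω / 2 * (‖x - x0‖ + ‖y - x0‖) * ‖x - y‖ :=
    fun x hx y hy => hDconv.norm_image_sub_le_of_norm_hasFDerivAt_le_mul_norm_sub
      (fun z hz => (hdiff z hz).simplifiedNewtonMap hA1) hω.le
      (fun z hz => (hLip x0 hx0 z hz).trans_eq (by rw [norm_sub_rev])) hx hy
  have hg₀ : ‖simplifiedNewtonMap A f x0 - x0‖ ≤ η := by simpa [simplifiedNewtonMap] using hη
  obtain ⟨xs, hxs, hfix, huniq⟩ := IsKantorovichMap.exists_isFixedPt_unique ⟨hR, hg, hg₀, hball⟩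
  simp only [isFixedPt_simplifiedNewtonMap_iff hA] at hfix huniq
  exact ⟨xs, hxs, hfix, huniq⟩

/-- Kantorovich's theorem, affine invariant form, uniqueness part: the zero in
`B̄(x⁰,ρ₋)` is the unique zero of `f` in `(B̄(x⁰,ρ₋) ∪ B(x⁰,ρ₊)) ∩ D`. -/
theorem kantorovich_uniqueness
    (n : ℕ) (D : Set (Fin n → ℝ)) (hDopen : IsOpen D) (hDconv : Convex ℝ D)
    (f : (Fin n → ℝ) → (Fin n → ℝ))
    (f' : (Fin n → ℝ) → ((Fin n → ℝ) →L[ℝ] (Fin n → ℝ)))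
    (hdiff : ∀ x ∈ D, HasFDerivAt f (f' x) x)
    (x0 : Fin n → ℝ) (hx0 : x0 ∈ D)
    (A : (Fin n → ℝ) →L[ℝ] (Fin n → ℝ))
    (hA1 : A ∘L f' x0 = ContinuousLinearMap.id ℝ (Fin n → ℝ))
    (hA2 : f' x0 ∘L A = ContinuousLinearMap.id ℝ (Fin n → ℝ))
    (η ω h : ℝ) (hη : ‖A (f x0)‖ ≤ η) (hω : 0 < ω)
    (hLip : ∀ x ∈ D, ∀ y ∈ D, ‖A ∘L (f' x - f' y)‖ ≤ ω * ‖x - y‖)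
    (hh : h = η * ω) (hhalf : h ≤ 1 / 2)
    (ρm ρp : ℝ) (hρm : ρm = (1 - Real.sqrt (1 - 2 * h)) / ω)
    (hρp : ρp = (1 + Real.sqrt (1 - 2 * h)) / ω)
    (hball : Metric.closedBall x0 ρm ⊆ D) :
    ∃ xs ∈ Metric.closedBall x0 ρm, f xs = 0 ∧
      ∀ y ∈ (Metric.closedBall x0 ρm ∪ Metric.ball x0 ρp) ∩ D, f y = 0 → y = xs :=
  kantorovich_uniqueness_general n D hDconv f f' hdiff x0 hx0 A hA1 hA2 η ω h hη hω hLip hh hhalf ρm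
    ρp hρm hρp hball
end

section
/- (Kantorovich, convergence part) Under the hypotheses of Kantorovich's theorem with h = ηω ≤ 1/2 and B̄(x⁰, ρ₋) ⊆ D, the Newton iterates x^{k+1} = x^k − f'(x^k)⁻¹ f(x^k) starting at x⁰ are well-defined, remain in B̄(x⁰, ρ₋), and converge to the zero x*; moreover ‖x* − x^k‖ ≤ (η/h) · (1 − √(1 − 2h))^{2^k} / 2^k for all k ≥ 0. -/
/-!
Multiplying by `A = f'(x⁰)⁻¹` replaces `f` by `g = A ∘ f`, which has the same Newton iterates and
satisfies `g'(x⁰) = 1`. With `s = √(1 - 2h)` and `u_k = kantorovichGap s k`, induction gives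
`ω ‖x^k - x⁰‖ ≤ 1 - s - u_k` and `2 ω ‖g x^k‖ ≤ u_k (u_k + 2 s)`: the Banach lemma bounds the
Newton step by `(u_k - u_{k+1}) / ω`, and the quadratic Taylor estimate at the new point turns
this into the residual bound at level `k + 1`. Telescoping the step bounds gives a Cauchy sequence
with `‖x* - x^k‖ ≤ u_k / ω`, and the invariant `2^k (u_k + s) ≥ 1` yields
`2^k u_k ≤ (1 - s)^(2^k)`.
-/

open Filter Topology Metric Set

/-- `ω (ρ₋ - t_k)`, where `t_k` are the Newton iterates from `0` for the scalar majorant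
`ω t² / 2 - t + η`, whose smaller root is `ρ₋`, and `s = √(1 - 2ηω)`. -/
noncomputable def kantorovichGap (s : ℝ) : ℕ → ℝ
  | 0 => 1 - s
  | k + 1 => kantorovichGap s k ^ 2 / (2 * (kantorovichGap s k + s))

section KantorovichGap

variable {s : ℝ}

theorem kantorovichGap_succ (k : ℕ) :
    kantorovichGap s (k + 1) = kantorovichGap s k ^ 2 / (2 * (kantorovichGap s k + s)) := rfl

theorem kantorovichGap_pos (hs0 : 0 ≤ s) (hs1 : s < 1) (k : ℕ) : 0 < kantorovichGap s k := by
  induction k with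
  | zero => exact sub_pos.2 hs1
  | succ k ih => rw [kantorovichGap_succ]; positivity

theorem kantorovichGap_sub_succ (hs0 : 0 ≤ s) (hs1 : s < 1) (k : ℕ) :
    kantorovichGap s k - kantorovichGap s (k + 1) =
      kantorovichGap s k * (kantorovichGap s k + 2 * s) / (2 * (kantorovichGap s k + s)) := by
  have := kantorovichGap_pos hs0 hs1 k
  rw [kantorovichGap_succ]
  field_simp
  ring

theorem kantorovichGap_sub_succ_sq (hs0 : 0 ≤ s) (hs1 : s < 1) (k : ℕ) :
    (kantorovichGap s k - kantorovichGap s (k + 1)) ^ 2 =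
      kantorovichGap s (k + 1) * (kantorovichGap s (k + 1) + 2 * s) := by
  have := kantorovichGap_pos hs0 hs1 k
  rw [kantorovichGap_succ]
  field_simp
  ring

theorem one_le_two_pow_mul_kantorovichGap_add (hs0 : 0 ≤ s) (hs1 : s < 1) (k : ℕ) :
    1 ≤ 2 ^ k * (kantorovichGap s k + s) := by
  induction k with
  | zero => simp [kantorovichGap]
  | succ k ih =>
    have hu := kantorovichGap_pos hs0 hs1 k
    have half_le : (kantorovichGap s k + s) / 2 ≤ kantorovichGap s (k + 1) + s := by
      rw [kantorovichGap_succ, div_add' _ _ _ (by positivity),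
        div_le_div_iff₀ two_pos (by positivity)]
      nlinarith [sq_nonneg s]
    calc (1 : ℝ) ≤ 2 ^ k * (kantorovichGap s k + s) := ih
      _ = 2 ^ (k + 1) * ((kantorovichGap s k + s) / 2) := by ring
      _ ≤ 2 ^ (k + 1) * (kantorovichGap s (k + 1) + s) := by gcongr

theorem two_pow_mul_kantorovichGap_le (hs0 : 0 ≤ s) (hs1 : s < 1) (k : ℕ) :
    2 ^ k * kantorovichGap s k ≤ (1 - s) ^ 2 ^ k := by
  induction k with
  | zero => simp [kantorovichGap]
  | succ k ih =>
    have hu := kantorovichGap_pos hs0 hs1 k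
    have hden := one_le_two_pow_mul_kantorovichGap_add hs0 hs1 k
    calc 2 ^ (k + 1) * kantorovichGap s (k + 1)
        = (2 ^ k * kantorovichGap s k) ^ 2 / (2 ^ k * (kantorovichGap s k + s)) := by
          rw [kantorovichGap_succ]; field_simp; ring
      _ ≤ (2 ^ k * kantorovichGap s k) ^ 2 := div_le_self (by positivity) hden
      _ ≤ ((1 - s) ^ 2 ^ k) ^ 2 := by gcongr
      _ = (1 - s) ^ 2 ^ (k + 1) := by rw [← pow_mul, pow_succ]

theorem kantorovichGap_le (hs0 : 0 ≤ s) (hs1 : s < 1) (k : ℕ) :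
    kantorovichGap s k ≤ (1 - s) ^ 2 ^ k / 2 ^ k := by
  rw [le_div_iff₀ (by positivity), mul_comm]
  exact two_pow_mul_kantorovichGap_le hs0 hs1 k

theorem tendsto_kantorovichGap_zero (hs0 : 0 ≤ s) (hs1 : s < 1) :
    Tendsto (kantorovichGap s) atTop (𝓝 0) := by
  refine squeeze_zero (fun k => (kantorovichGap_pos hs0 hs1 k).le) (fun k => ?_)
    (tendsto_pow_atTop_nhds_zero_of_lt_one (by norm_num : (0 : ℝ) ≤ 1 / 2) (by norm_num))
  calc kantorovichGap s k ≤ (1 - s) ^ 2 ^ k / 2 ^ k := kantorovichGap_le hs0 hs1 k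
    _ ≤ 1 / 2 ^ k := by gcongr; exact pow_le_one₀ (by linarith) (by linarith)
    _ = (1 / 2) ^ k := by rw [one_div_pow]

end KantorovichGap

section Telescoping

variable {X : Type*} [PseudoMetricSpace X] {x : ℕ → X} {a : ℕ → ℝ}

theorem dist_le_sub_of_dist_succ_le_sub (h : ∀ k, dist (x k) (x (k + 1)) ≤ a k - a (k + 1))
    {k m : ℕ} (hkm : k ≤ m) : dist (x k) (x m) ≤ a k - a m := by
  induction m, hkm using Nat.le_induction with
  | base => simp
  | succ m _ ih => linarith [dist_triangle (x k) (x m) (x (m + 1)), h m]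

theorem cauchySeq_of_dist_succ_le_sub (h : ∀ k, dist (x k) (x (k + 1)) ≤ a k - a (k + 1))
    (ha : ∀ k, 0 ≤ a k) : CauchySeq x := by
  refine cauchySeq_of_dist_le_of_summable _ h (summable_of_sum_range_le (c := a 0)
    (fun k => dist_nonneg.trans (h k)) fun m => ?_)
  rw [Finset.sum_range_sub']
  linarith [ha m]

theorem dist_le_of_tendsto_of_dist_succ_le_sub (h : ∀ k, dist (x k) (x (k + 1)) ≤ a k - a (k + 1))
    (ha : ∀ k, 0 ≤ a k) {y : X} (hy : Tendsto x atTop (𝓝 y)) (k : ℕ) : dist (x k) y ≤ a k :=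
  le_of_tendsto (tendsto_const_nhds.dist hy) (eventually_atTop.2 ⟨k, fun m hkm =>
    (dist_le_sub_of_dist_succ_le_sub h hkm).trans (by linarith [ha m])⟩)

end Telescoping

theorem mem_closedBall_div_of_mul_norm_sub_le {E : Type*} [SeminormedAddCommGroup E] {x y : E}
    {ω r : ℝ} (hω : 0 < ω) (h : ω * ‖y - x‖ ≤ r) : y ∈ closedBall x (r / ω) := by
  rw [mem_closedBall, dist_eq_norm, le_div_iff₀ hω, mul_comm]
  exact h

section Taylor

variable {E F : Type*} [NormedAddCommGroup E] [NormedSpace ℝ E] [NormedAddCommGroup F]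
  [NormedSpace ℝ F]

theorem Convex.norm_image_sub_sub_fderiv_le {f : E → F} {f' : E → E →L[ℝ] F} {s : Set E}
    {x y : E} {ω : ℝ} (hs : Convex ℝ s) (hf : ∀ z ∈ s, HasFDerivAt f (f' z) z)
    (hL : ∀ z ∈ s, ‖f' z - f' x‖ ≤ ω * ‖z - x‖) (hx : x ∈ s) (hy : y ∈ s) :
    ‖f y - f x - f' x (y - x)‖ ≤ ω / 2 * ‖y - x‖ ^ 2 := by
  set z : ℝ → E := fun t => x + t • (y - x)
  have hz : ∀ t ∈ Icc (0 : ℝ) 1, z t ∈ s := fun t ht => hs.add_smul_sub_mem hx hy ht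
  set r : ℝ → F := fun t => f (z t) - f x - t • f' x (y - x)
  have hr : ∀ t ∈ Icc (0 : ℝ) 1, HasDerivAt r ((f' (z t) - f' x) (y - x)) t := by
    intro t ht
    have hzt : HasDerivAt z (y - x) t := by
      simpa only [one_smul] using ((hasDerivAt_id' t).smul_const (y - x)).const_add x
    rw [sub_apply]
    exact (((hf _ (hz t ht)).comp_hasDerivAt t hzt).sub_const (f x)).sub
      (by simpa using (hasDerivAt_id t).smul_const (f' x (y - x)))
  have hr' : ∀ t ∈ Icc (0 : ℝ) 1, ‖(f' (z t) - f' x) (y - x)‖ ≤ ω * ‖y - x‖ ^ 2 * t := by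
    intro t ht
    calc ‖(f' (z t) - f' x) (y - x)‖ ≤ ‖f' (z t) - f' x‖ * ‖y - x‖ :=
          ContinuousLinearMap.le_opNorm _ _
      _ ≤ ω * ‖z t - x‖ * ‖y - x‖ := by gcongr; exact hL _ (hz t ht)
      _ = ω * ‖y - x‖ ^ 2 * t := by
          simp only [z, add_sub_cancel_left, norm_smul, Real.norm_of_nonneg ht.1]; ring
  have key := image_norm_le_of_norm_deriv_right_le_deriv_boundary (a := 0) (b := 1)
    (B := fun t => ω / 2 * ‖y - x‖ ^ 2 * t ^ 2) (B' := fun t => ω * ‖y - x‖ ^ 2 * t)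
    (fun t ht => (hr t ht).continuousAt.continuousWithinAt)
    (fun t ht => (hr t (Ico_subset_Icc_self ht)).hasDerivWithinAt) (by simp [r, z])
    (fun t => ((hasDerivAt_pow 2 t).const_mul _).congr_deriv (by push_cast; ring))
    (fun t ht => hr' t (Ico_subset_Icc_self ht)) (right_mem_Icc.2 zero_le_one)
  simpa [r, z] using key

end Taylor

section Newton

variable {E : Type*} [NormedAddCommGroup E] [NormedSpace ℝ E]

theorem ContinuousLinearMap.norm_le_norm_apply_div_of_norm_one_sub_le {T : E →L[ℝ] E} {c : ℝ}
    (hT : ‖1 - T‖ ≤ c) (hc : c < 1) (v : E) : ‖v‖ ≤ ‖T v‖ / (1 - c) := by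
  have hv : ‖v - T v‖ ≤ c * ‖v‖ :=
    ((1 - T).le_opNorm v).trans (mul_le_mul_of_nonneg_right hT (norm_nonneg v))
  rw [le_div_iff₀ (sub_pos.2 hc)]
  nlinarith [norm_sub_norm_le v (T v)]

/-- `Ring.inverse` is `0` at a non-invertible derivative, where this is not a Newton step. -/
noncomputable def newtonMap (g : E → E) (g' : E → E →L[ℝ] E) (x : E) : E :=
  x - Ring.inverse (g' x) (g x)

theorem newtonMap_units_mul (A : (E →L[ℝ] E)ˣ) (g : E → E) (g' : E → E →L[ℝ] E) :
    newtonMap (fun x => (A : E →L[ℝ] E) (g x)) (fun x => A * g' x) = newtonMap g g' := by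
  funext x
  simp [newtonMap, Ring.inverse_mul (Or.inl A.isUnit), ← mul_apply_eq_comp]

theorem apply_newtonMap_sub {g : E → E} {g' : E → E →L[ℝ] E} {x : E} (hx : IsUnit (g' x)) :
    g' x (newtonMap g g' x - x) = -g x := by
  rw [newtonMap, sub_sub_cancel_left, map_neg, ← mul_apply_eq_comp, Ring.mul_inverse_cancel _ hx,
    one_apply_eq_self]

theorem isUnit_and_norm_newtonMap_sub_le [CompleteSpace E] {g : E → E} {g' : E → E →L[ℝ] E}
    {x : E} {c : ℝ} (hx : ‖1 - g' x‖ ≤ c) (hc : c < 1) :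
    IsUnit (g' x) ∧ ‖newtonMap g g' x - x‖ ≤ ‖g x‖ / (1 - c) := by
  have hu : IsUnit (g' x) := by simpa using isUnit_one_sub_of_norm_lt_one (hx.trans_lt hc)
  refine ⟨hu, ?_⟩
  simpa [apply_newtonMap_sub hu] using
    (g' x).norm_le_norm_apply_div_of_norm_one_sub_le hx hc (newtonMap g g' x - x)

theorem norm_apply_newtonMap_le {g : E → E} {g' : E → E →L[ℝ] E} {s : Set E} {x : E} {ω : ℝ}
    (hs : Convex ℝ s) (hg : ∀ z ∈ s, HasFDerivAt g (g' z) z)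
    (hL : ∀ z ∈ s, ‖g' z - g' x‖ ≤ ω * ‖z - x‖) (hx : x ∈ s) (hN : newtonMap g g' x ∈ s)
    (hu : IsUnit (g' x)) : ‖g (newtonMap g g' x)‖ ≤ ω / 2 * ‖newtonMap g g' x - x‖ ^ 2 := by
  simpa [apply_newtonMap_sub hu] using hs.norm_image_sub_sub_fderiv_le hg hL hx hN

variable [CompleteSpace E] {g : E → E} {g' : E → E →L[ℝ] E} {x0 : E} {ω s : ℝ}

theorem kantorovich_step (hω : 0 < ω) (hs0 : 0 ≤ s) (hs1 : s < 1)
    (hg : ∀ x ∈ closedBall x0 ((1 - s) / ω), HasFDerivAt g (g' x) x) (hg'0 : g' x0 = 1)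
    (hLip : ∀ x ∈ closedBall x0 ((1 - s) / ω), ∀ y ∈ closedBall x0 ((1 - s) / ω),
      ‖g' x - g' y‖ ≤ ω * ‖x - y‖)
    {x : E} {k : ℕ} (hx : ω * ‖x - x0‖ ≤ 1 - s - kantorovichGap s k)
    (hgx : 2 * ω * ‖g x‖ ≤ kantorovichGap s k * (kantorovichGap s k + 2 * s)) :
    IsUnit (g' x) ∧
      ω * ‖newtonMap g g' x - x‖ ≤ kantorovichGap s k - kantorovichGap s (k + 1) ∧
      ω * ‖newtonMap g g' x - x0‖ ≤ 1 - s - kantorovichGap s (k + 1) ∧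
      2 * ω * ‖g (newtonMap g g' x)‖ ≤
        kantorovichGap s (k + 1) * (kantorovichGap s (k + 1) + 2 * s) := by
  have hu := kantorovichGap_pos hs0 hs1 k
  have hu' := kantorovichGap_pos hs0 hs1 (k + 1)
  have hstep_eq := kantorovichGap_sub_succ hs0 hs1 k
  set u := kantorovichGap s k
  set u' := kantorovichGap s (k + 1)
  have hxB := mem_closedBall_div_of_mul_norm_sub_le hω (hx.trans (by linarith : _ ≤ 1 - s))
  have hid : ‖1 - g' x‖ ≤ 1 - s - u :=
    calc ‖1 - g' x‖ = ‖g' x0 - g' x‖ := by rw [hg'0]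
      _ ≤ ω * ‖x0 - x‖ := hLip _ (mem_closedBall_self (div_nonneg (by linarith) hω.le)) _ hxB
      _ ≤ 1 - s - u := by rwa [norm_sub_rev]
  obtain ⟨hunit, hN⟩ := isUnit_and_norm_newtonMap_sub_le (g := g) hid (by linarith)
  have hstep : ω * ‖newtonMap g g' x - x‖ ≤ u - u' := by
    rw [show 1 - (1 - s - u) = s + u by ring] at hN
    rw [hstep_eq]
    calc ω * ‖newtonMap g g' x - x‖ ≤ ω * (‖g x‖ / (s + u)) := by gcongr
      _ = 2 * ω * ‖g x‖ / (2 * (u + s)) := by field_simp; ring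
      _ ≤ u * (u + 2 * s) / (2 * (u + s)) := by gcongr
  have hN0 : ω * ‖newtonMap g g' x - x0‖ ≤ 1 - s - u' := by
    have := norm_sub_le_norm_sub_add_norm_sub (newtonMap g g' x) x x0
    nlinarith
  refine ⟨hunit, hstep, hN0, ?_⟩
  have hres := norm_apply_newtonMap_le (convex_closedBall x0 ((1 - s) / ω)) hg
    (fun z hz => hLip z hz x hxB) hxB
    (mem_closedBall_div_of_mul_norm_sub_le hω (hN0.trans (by linarith : _ ≤ 1 - s))) hunit
  calc 2 * ω * ‖g (newtonMap g g' x)‖ ≤ (ω * ‖newtonMap g g' x - x‖) ^ 2 := by nlinarith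
    _ ≤ (u - u') ^ 2 := by gcongr
    _ = u' * (u' + 2 * s) := kantorovichGap_sub_succ_sq hs0 hs1 k

theorem kantorovich_iterate_bounds (hω : 0 < ω) (hs0 : 0 ≤ s) (hs1 : s < 1)
    (hg : ∀ x ∈ closedBall x0 ((1 - s) / ω), HasFDerivAt g (g' x) x) (hg'0 : g' x0 = 1)
    (hLip : ∀ x ∈ closedBall x0 ((1 - s) / ω), ∀ y ∈ closedBall x0 ((1 - s) / ω),
      ‖g' x - g' y‖ ≤ ω * ‖x - y‖)
    (hgx0 : 2 * ω * ‖g x0‖ ≤ 1 - s ^ 2) (k : ℕ) :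
    ω * ‖(newtonMap g g')^[k] x0 - x0‖ ≤ 1 - s - kantorovichGap s k ∧
      2 * ω * ‖g ((newtonMap g g')^[k] x0)‖ ≤
        kantorovichGap s k * (kantorovichGap s k + 2 * s) := by
  induction k with
  | zero => simpa [kantorovichGap] using hgx0.trans_eq (by ring)
  | succ k ih =>
    rw [Function.iterate_succ_apply']
    exact (kantorovich_step hω hs0 hs1 hg hg'0 hLip ih.1 ih.2).2.2

theorem exists_tendsto_newtonMap_iterate_of_kantorovich (hω : 0 < ω) (hs0 : 0 ≤ s) (hs1 : s < 1)
    (hg : ∀ x ∈ closedBall x0 ((1 - s) / ω), HasFDerivAt g (g' x) x) (hg'0 : g' x0 = 1)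
    (hLip : ∀ x ∈ closedBall x0 ((1 - s) / ω), ∀ y ∈ closedBall x0 ((1 - s) / ω),
      ‖g' x - g' y‖ ≤ ω * ‖x - y‖)
    (hgx0 : 2 * ω * ‖g x0‖ ≤ 1 - s ^ 2) :
    ∃ xs, g xs = 0 ∧ Tendsto (fun k => (newtonMap g g')^[k] x0) atTop (𝓝 xs) ∧
      ∀ k, ‖xs - (newtonMap g g')^[k] x0‖ ≤ kantorovichGap s k / ω := by
  set x : ℕ → E := fun k => (newtonMap g g')^[k] x0
  have hbounds := kantorovich_iterate_bounds hω hs0 hs1 hg hg'0 hLip hgx0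
  have hstep (k : ℕ) :
      dist (x k) (x (k + 1)) ≤ kantorovichGap s k / ω - kantorovichGap s (k + 1) / ω := by
    rw [dist_comm, dist_eq_norm, ← sub_div, le_div_iff₀ hω, mul_comm]
    simp only [x, Function.iterate_succ_apply']
    exact (kantorovich_step hω hs0 hs1 hg hg'0 hLip (hbounds k).1 (hbounds k).2).2.1
  have hgap (k : ℕ) : 0 ≤ kantorovichGap s k / ω :=
    div_nonneg (kantorovichGap_pos hs0 hs1 k).le hω.le
  obtain ⟨xs, hxs⟩ := cauchySeq_tendsto_of_complete (cauchySeq_of_dist_succ_le_sub hstep hgap)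
  have herr (k : ℕ) : ‖xs - x k‖ ≤ kantorovichGap s k / ω := by
    rw [← dist_eq_norm, dist_comm]
    exact dist_le_of_tendsto_of_dist_succ_le_sub hstep hgap hxs k
  refine ⟨xs, ?_, hxs, herr⟩
  have hxsB : xs ∈ closedBall x0 ((1 - s) / ω) := by
    simpa [mem_closedBall, dist_eq_norm, kantorovichGap, x] using herr 0
  have hlim : Tendsto (fun k => g (x k)) atTop (𝓝 (g xs)) :=
    (hg xs hxsB).continuousAt.tendsto.comp hxs
  have hresidual : Tendsto (fun k => g (x k)) atTop (𝓝 0) := by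
    have hu := tendsto_kantorovichGap_zero hs0 hs1
    refine squeeze_zero_norm (fun k => ?_)
      (by simpa using (hu.mul (hu.add_const (2 * s))).div_const (2 * ω))
    rw [le_div_iff₀ (by positivity), mul_comm]
    exact (hbounds k).2
  exact tendsto_nhds_unique hlim hresidual

end Newton

theorem kantorovich_convergence_general
    (n : ℕ) (D : Set (Fin n → ℝ))
    (f : (Fin n → ℝ) → (Fin n → ℝ))
    (f' : (Fin n → ℝ) → ((Fin n → ℝ) →L[ℝ] (Fin n → ℝ)))
    (hdiff : ∀ x ∈ D, HasFDerivAt f (f' x) x)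
    (x0 : Fin n → ℝ)
    (A : (Fin n → ℝ) →L[ℝ] (Fin n → ℝ))
    (hA1 : A ∘L f' x0 = ContinuousLinearMap.id ℝ (Fin n → ℝ))
    (hA2 : f' x0 ∘L A = ContinuousLinearMap.id ℝ (Fin n → ℝ))
    (η ω h : ℝ) (hη : ‖A (f x0)‖ ≤ η) (hω : 0 < ω)
    (hLip : ∀ x ∈ D, ∀ y ∈ D, ‖A ∘L (f' x - f' y)‖ ≤ ω * ‖x - y‖)
    (hh : h = η * ω) (hpos : 0 < h) (hhalf : h ≤ 1 / 2)
    (ρ : ℝ) (hρ : ρ = (1 - Real.sqrt (1 - 2 * h)) / ω)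
    (hball : Metric.closedBall x0 ρ ⊆ D) :
    ∃ (x : ℕ → (Fin n → ℝ)) (xs : Fin n → ℝ),
      x 0 = x0 ∧ f xs = 0 ∧ xs ∈ Metric.closedBall x0 ρ ∧
      (∀ k, x k ∈ Metric.closedBall x0 ρ) ∧
      (∀ k, ∃ Ak : (Fin n → ℝ) →L[ℝ] (Fin n → ℝ),
        Ak ∘L f' (x k) = ContinuousLinearMap.id ℝ (Fin n → ℝ) ∧
        f' (x k) ∘L Ak = ContinuousLinearMap.id ℝ (Fin n → ℝ) ∧
        x (k + 1) = x k - Ak (f (x k))) ∧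
      Filter.Tendsto x Filter.atTop (nhds xs) ∧
      (∀ k : ℕ, ‖xs - x k‖ ≤ (η / h) * ((1 - Real.sqrt (1 - 2 * h)) ^ (2 ^ k) / 2 ^ k)) := by
  set s := Real.sqrt (1 - 2 * h)
  have hs0 : 0 ≤ s := Real.sqrt_nonneg _
  have hs_sq : s ^ 2 = 1 - 2 * h := Real.sq_sqrt (by linarith)
  have hs1 : s < 1 := by nlinarith
  subst hρ
  let U : ((Fin n → ℝ) →L[ℝ] (Fin n → ℝ))ˣ := ⟨A, f' x0, hA1, hA2⟩
  have hg : ∀ x ∈ closedBall x0 ((1 - s) / ω), HasFDerivAt (fun x => A (f x)) (A * f' x) x :=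
    fun x hx => A.hasFDerivAt.comp x (hdiff x (hball hx))
  have hgLip : ∀ x ∈ closedBall x0 ((1 - s) / ω), ∀ y ∈ closedBall x0 ((1 - s) / ω),
      ‖A * f' x - A * f' y‖ ≤ ω * ‖x - y‖ := fun x hx y hy => by
    rw [← mul_sub]; exact hLip x (hball hx) y (hball hy)
  have hgx0 : 2 * ω * ‖A (f x0)‖ ≤ 1 - s ^ 2 := by rw [hs_sq, hh]; nlinarith
  have hbounds := kantorovich_iterate_bounds hω hs0 hs1 hg hA1 hgLip hgx0
  obtain ⟨xs, hgxs, hlim, herr⟩ :=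
    exists_tendsto_newtonMap_iterate_of_kantorovich hω hs0 hs1 hg hA1 hgLip hgx0
  have hN : newtonMap (fun x => A (f x)) (fun x => A * f' x) = newtonMap f f' :=
    newtonMap_units_mul U f f'
  rw [hN] at hbounds hlim herr
  set x := fun k => (newtonMap f f')^[k] x0
  refine ⟨x, xs, rfl, ?_, ?_, fun k => ?_, fun k => ?_, hlim, fun k => ?_⟩
  · simpa [hgxs, eq_comm] using DFunLike.congr_fun hA2 (f xs)
  · simpa [mem_closedBall, dist_eq_norm, kantorovichGap] using herr 0
  · exact mem_closedBall_div_of_mul_norm_sub_le hω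
      ((hbounds k).1.trans (by linarith [kantorovichGap_pos hs0 hs1 k]))
  · have hF : IsUnit (f' (x k)) := (U.isUnit_units_mul _).1
      (kantorovich_step hω hs0 hs1 hg hA1 hgLip (hbounds k).1 (hbounds k).2).1
    exact ⟨Ring.inverse (f' (x k)), Ring.inverse_mul_cancel _ hF, Ring.mul_inverse_cancel _ hF,
      Function.iterate_succ_apply' _ _ _⟩
  · have hη0 : η ≠ 0 := (pos_of_mul_pos_left (hh ▸ hpos) hω.le).ne'
    calc ‖xs - x k‖ ≤ kantorovichGap s k / ω := herr k
      _ ≤ (1 - s) ^ 2 ^ k / 2 ^ k / ω := by gcongr; exact kantorovichGap_le hs0 hs1 k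
      _ = η / h * ((1 - s) ^ 2 ^ k / 2 ^ k) := by rw [hh]; field_simp

/-- Kantorovich's theorem, convergence part: the Newton iterates starting at `x⁰` are
well-defined, remain in `B̄(x⁰,ρ₋)`, converge to a zero `x*`, and satisfy the a priori
error bound `‖x* − x^k‖ ≤ (η/h)(1−√(1−2h))^{2^k}/2^k`. -/
theorem kantorovich_convergence
    (n : ℕ) (D : Set (Fin n → ℝ)) (hDopen : IsOpen D) (hDconv : Convex ℝ D)
    (f : (Fin n → ℝ) → (Fin n → ℝ))
    (f' : (Fin n → ℝ) → ((Fin n → ℝ) →L[ℝ] (Fin n → ℝ)))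
    (hdiff : ∀ x ∈ D, HasFDerivAt f (f' x) x)
    (x0 : Fin n → ℝ) (hx0 : x0 ∈ D)
    (A : (Fin n → ℝ) →L[ℝ] (Fin n → ℝ))
    (hA1 : A ∘L f' x0 = ContinuousLinearMap.id ℝ (Fin n → ℝ))
    (hA2 : f' x0 ∘L A = ContinuousLinearMap.id ℝ (Fin n → ℝ))
    (η ω h : ℝ) (hη : ‖A (f x0)‖ ≤ η) (hω : 0 < ω)
    (hLip : ∀ x ∈ D, ∀ y ∈ D, ‖A ∘L (f' x - f' y)‖ ≤ ω * ‖x - y‖)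
    (hh : h = η * ω) (hpos : 0 < h) (hhalf : h ≤ 1 / 2)
    (ρ : ℝ) (hρ : ρ = (1 - Real.sqrt (1 - 2 * h)) / ω)
    (hball : Metric.closedBall x0 ρ ⊆ D) :
    ∃ (x : ℕ → (Fin n → ℝ)) (xs : Fin n → ℝ),
      x 0 = x0 ∧ f xs = 0 ∧ xs ∈ Metric.closedBall x0 ρ ∧
      (∀ k, x k ∈ Metric.closedBall x0 ρ) ∧
      (∀ k, ∃ Ak : (Fin n → ℝ) →L[ℝ] (Fin n → ℝ),
        Ak ∘L f' (x k) = ContinuousLinearMap.id ℝ (Fin n → ℝ) ∧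
        f' (x k) ∘L Ak = ContinuousLinearMap.id ℝ (Fin n → ℝ) ∧
        x (k + 1) = x k - Ak (f (x k))) ∧
      Filter.Tendsto x Filter.atTop (nhds xs) ∧
      (∀ k : ℕ, ‖xs - x k‖ ≤ (η / h) * ((1 - Real.sqrt (1 - 2 * h)) ^ (2 ^ k) / 2 ^ k)) :=
  kantorovich_convergence_general n D f f' hdiff x0 A hA1 hA2 η ω h hη hω hLip hh hpos hhalf ρ hρ
    hball
end

section
/- (Termination justification for subdivision near regular zeros) Let f : ℝ² → ℝ² be twice continuously differentiable, and let x* be a zero of f with f'(x*) invertible. Then there exists δ > 0 such that every point x⁰ ∈ B̄(x*, δ) with f'(x⁰) invertible satisfies the Kantorovich condition h = ηω ≤ 1/4 with η = ‖f'(x⁰)⁻¹f(x⁰)‖ and ω any Lipschitz constant of f'(x⁰)⁻¹f' on B̄(x⁰, 2δ); i.e., sufficiently small subdomains containing x* pass the Kantorovich test. -/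
/-!
Near `x*` the inverses `f'(x⁰)⁻¹` stay bounded by `2‖f'(x*)⁻¹‖` (a perturbation argument), `f'`
is Lipschitz because `f` is `C²`, and `‖f(x⁰)‖ = O(‖x⁰ - x*‖)` because `f(x*) = 0`. So a
Lipschitz constant `ω` can be chosen independently of `x⁰` and of `δ`, while `η = O(δ)`; shrinking
`δ` gives `ηω ≤ 1/4`.
-/

open Filter Metric Topology

theorem ContinuousLinearMap.norm_le_two_mul_of_comp_eq_id
    {𝕜 E F : Type*} [NontriviallyNormedField 𝕜] [NormedAddCommGroup E] [NormedSpace 𝕜 E]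
    [NormedAddCommGroup F] [NormedSpace 𝕜 F] {A B : F →L[𝕜] E} {S T : E →L[𝕜] F}
    (hTA : T ∘L A = .id 𝕜 F) (hBS : B ∘L S = .id 𝕜 E) (hST : ‖A‖ * ‖T - S‖ ≤ 1 / 2) :
    ‖B‖ ≤ 2 * ‖A‖ := by
  have hB : B = A + B ∘L (T - S) ∘L A := by
    rw [ContinuousLinearMap.sub_comp, ContinuousLinearMap.comp_sub, hTA,
      ← ContinuousLinearMap.comp_assoc, hBS]
    simp
  have : ‖B‖ ≤ ‖A‖ + ‖B‖ * (‖T - S‖ * ‖A‖) :=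
    calc ‖B‖ = ‖A + B ∘L (T - S) ∘L A‖ := congrArg _ hB
      _ ≤ ‖A‖ + ‖B‖ * (‖T - S‖ * ‖A‖) := by
        grw [norm_add_le, ContinuousLinearMap.opNorm_comp_le, ContinuousLinearMap.opNorm_comp_le]
  nlinarith [norm_nonneg B]

theorem eventually_norm_le_two_mul_of_comp_eq_id
    {𝕜 X E F : Type*} [TopologicalSpace X] [NontriviallyNormedField 𝕜] [NormedAddCommGroup E]
    [NormedSpace 𝕜 E] [NormedAddCommGroup F] [NormedSpace 𝕜 F] {g : X → E →L[𝕜] F} {x : X}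
    (hg : ContinuousAt g x) {A : F →L[𝕜] E} (hA : g x ∘L A = .id 𝕜 F) :
    ∀ᶠ y in 𝓝 x, ∀ B : F →L[𝕜] E, B ∘L g y = .id 𝕜 E → ‖B‖ ≤ 2 * ‖A‖ := by
  have hsmall : ∀ᶠ y in 𝓝 x, ‖A‖ * ‖g x - g y‖ < 1 / 2 :=
    (continuousAt_const.mul (continuousAt_const.sub hg).norm).eventually_lt continuousAt_const
      (by simp)
  filter_upwards [hsmall] with y hy B hB
  exact ContinuousLinearMap.norm_le_two_mul_of_comp_eq_id hA hB hy.le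

section

variable {𝕂 E F : Type*} [RCLike 𝕂] [NormedAddCommGroup E] [NormedSpace 𝕂 E]
  [NormedAddCommGroup F] [NormedSpace 𝕂 F]

def PassesKantorovichTest (f : E → F) (x0 : E) (A0 : F →L[𝕂] E) (ρ : ℝ) : Prop :=
  ∃ ω > (0 : ℝ),
    (∀ x ∈ closedBall x0 ρ, ∀ y ∈ closedBall x0 ρ,
      ‖A0 ∘L (fderiv 𝕂 f x - fderiv 𝕂 f y)‖ ≤ ω * ‖x - y‖) ∧
    ‖A0 (f x0)‖ * ω ≤ 1 / 4

theorem passesKantorovichTest_of_lipschitzOnWith {f : E → F} {x0 : E} {A0 : F →L[𝕂] E}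
    {ρ M : ℝ} {K : NNReal} (hf' : LipschitzOnWith K (fderiv 𝕂 f) (closedBall x0 ρ))
    (hA0 : ‖A0‖ ≤ M) (hη : M * ‖f x0‖ * (M * K + 1) ≤ 1 / 4) :
    PassesKantorovichTest f x0 A0 ρ := by
  have hM : 0 ≤ M := (norm_nonneg A0).trans hA0
  refine ⟨M * K + 1, by positivity, fun x hx y hy => ?_, ?_⟩
  · calc ‖A0 ∘L (fderiv 𝕂 f x - fderiv 𝕂 f y)‖
        ≤ ‖A0‖ * ‖fderiv 𝕂 f x - fderiv 𝕂 f y‖ := A0.opNorm_comp_le _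
      _ ≤ M * (K * ‖x - y‖) := by
        gcongr
        simpa only [dist_eq_norm] using hf'.dist_le_mul x hx y hy
      _ ≤ (M * K + 1) * ‖x - y‖ := by nlinarith [norm_nonneg (x - y)]
  · calc ‖A0 (f x0)‖ * (M * K + 1) ≤ M * ‖f x0‖ * (M * K + 1) := by
          gcongr
          exact A0.le_of_opNorm_le hA0 _
      _ ≤ 1 / 4 := hη

theorem exists_pos_forall_passesKantorovichTest {f : E → F} {xs : E} (hf : ContDiffAt 𝕂 2 f xs)
    (hzero : f xs = 0) {A : F →L[𝕂] E} (hA : fderiv 𝕂 f xs ∘L A = .id 𝕂 F) :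
    ∃ δ > (0 : ℝ), ∀ x0 ∈ closedBall xs δ, ∀ A0 : F →L[𝕂] E,
      A0 ∘L fderiv 𝕂 f x0 = .id 𝕂 E → PassesKantorovichTest f x0 A0 (2 * δ) := by
  obtain ⟨K, t, ht, hf'K⟩ := (hf.fderiv_right (m := 1) le_rfl).exists_lipschitzOnWith
  obtain ⟨C, u, hu, hfC⟩ := (hf.of_le one_le_two).exists_lipschitzOnWith
  have hinv := eventually_norm_le_two_mul_of_comp_eq_id (hf.continuousAt_fderiv two_ne_zero) hA
  obtain ⟨r, hr, hrtu⟩ := nhds_basis_ball.mem_iff.1 (inter_mem (inter_mem ht hu) hinv)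
  set M := 2 * ‖A‖
  obtain ⟨δ, ⟨hδr, hδη⟩, hδ⟩ :
      ∃ δ, (3 * δ < r ∧ M * (C * δ) * (M * K + 1) < 1 / 4) ∧ 0 < δ := by
    have hsmall : ∀ᶠ δ in 𝓝 (0 : ℝ), 3 * δ < r ∧ M * (C * δ) * (M * K + 1) < 1 / 4 :=
      ((continuousAt_const.mul continuousAt_id).eventually_lt continuousAt_const (by simpa)).and
        ((continuousAt_const.mul (continuousAt_const.mul continuousAt_id)).mul continuousAt_const
          |>.eventually_lt continuousAt_const (by norm_num))
    exact ((hsmall.filter_mono nhdsWithin_le_nhds).and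
      (self_mem_nhdsWithin (s := Set.Ioi 0))).exists
  refine ⟨δ, hδ, fun x0 hx0 A0 hA0 => ?_⟩
  have hx0r : x0 ∈ ball xs r := closedBall_subset_ball (by linarith) hx0
  have hball : closedBall x0 (2 * δ) ⊆ ball xs r :=
    closedBall_subset_ball' (by rw [mem_closedBall] at hx0; linarith)
  have hfx0 : ‖f x0‖ ≤ C * δ :=
    calc ‖f x0‖ = dist (f x0) (f xs) := by rw [hzero, dist_zero_right]
      _ ≤ C * dist x0 xs := hfC.dist_le_mul x0 (hrtu hx0r).1.2 xs (hrtu (mem_ball_self hr)).1.2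
      _ ≤ C * δ := by gcongr; exact hx0
  refine passesKantorovichTest_of_lipschitzOnWith (hf'K.mono fun x hx => (hrtu (hball hx)).1.1)
    ((hrtu hx0r).2 A0 hA0) ?_
  calc M * ‖f x0‖ * (M * K + 1) ≤ M * (C * δ) * (M * K + 1) := by gcongr
    _ ≤ 1 / 4 := hδη.le

end

theorem kantorovich_test_passes_near_regular_zero_general
    (f : (Fin 2 → ℝ) → (Fin 2 → ℝ)) (hf : ContDiff ℝ 2 f)
    (xs : Fin 2 → ℝ) (hzero : f xs = 0)
    (A : (Fin 2 → ℝ) →L[ℝ] (Fin 2 → ℝ))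
    (hA2 : fderiv ℝ f xs ∘L A = ContinuousLinearMap.id ℝ (Fin 2 → ℝ)) :
    ∃ δ > (0 : ℝ), ∀ x0 ∈ Metric.closedBall xs δ,
      ∀ A0 : (Fin 2 → ℝ) →L[ℝ] (Fin 2 → ℝ),
        A0 ∘L fderiv ℝ f x0 = ContinuousLinearMap.id ℝ (Fin 2 → ℝ) →
        fderiv ℝ f x0 ∘L A0 = ContinuousLinearMap.id ℝ (Fin 2 → ℝ) →
        ∃ ω > (0 : ℝ),
          (∀ x ∈ Metric.closedBall x0 (2 * δ), ∀ y ∈ Metric.closedBall x0 (2 * δ),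
            ‖A0 ∘L (fderiv ℝ f x - fderiv ℝ f y)‖ ≤ ω * ‖x - y‖) ∧
          ‖A0 (f x0)‖ * ω ≤ 1 / 4 := by
  obtain ⟨δ, hδ, hpass⟩ := exists_pos_forall_passesKantorovichTest hf.contDiffAt hzero hA2
  exact ⟨δ, hδ, fun x0 hx0 A0 hA0 _ => hpass x0 hx0 A0 hA0⟩

/-- Near a regular zero of a C² map, all sufficiently close starting points pass the
Kantorovich test: there is `δ > 0` such that every `x⁰ ∈ B̄(x*, δ)` with invertible
Jacobian admits a Lipschitz constant `ω` for `f'(x⁰)⁻¹f'` on `B̄(x⁰, 2δ)` with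
`h = ηω ≤ 1/4`, where `η = ‖f'(x⁰)⁻¹ f(x⁰)‖`. -/
theorem kantorovich_test_passes_near_regular_zero
    (f : (Fin 2 → ℝ) → (Fin 2 → ℝ)) (hf : ContDiff ℝ 2 f)
    (xs : Fin 2 → ℝ) (hzero : f xs = 0)
    (A : (Fin 2 → ℝ) →L[ℝ] (Fin 2 → ℝ))
    (hA1 : A ∘L fderiv ℝ f xs = ContinuousLinearMap.id ℝ (Fin 2 → ℝ))
    (hA2 : fderiv ℝ f xs ∘L A = ContinuousLinearMap.id ℝ (Fin 2 → ℝ)) :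
    ∃ δ > (0 : ℝ), ∀ x0 ∈ Metric.closedBall xs δ,
      ∀ A0 : (Fin 2 → ℝ) →L[ℝ] (Fin 2 → ℝ),
        A0 ∘L fderiv ℝ f x0 = ContinuousLinearMap.id ℝ (Fin 2 → ℝ) →
        fderiv ℝ f x0 ∘L A0 = ContinuousLinearMap.id ℝ (Fin 2 → ℝ) →
        ∃ ω > (0 : ℝ),
          (∀ x ∈ Metric.closedBall x0 (2 * δ), ∀ y ∈ Metric.closedBall x0 (2 * δ),
            ‖A0 ∘L (fderiv ℝ f x - fderiv ℝ f y)‖ ≤ ω * ‖x - y‖) ∧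
          ‖A0 (f x0)‖ * ω ≤ 1 / 4 :=
  kantorovich_test_passes_near_regular_zero_general f hf xs hzero A hA2
end
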